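/- arXiv:2310.18725 — 3 statements merged into one kernel-verified Lean document; each statement's English description precedes it below -/
import Mathlib

section
/- Let f : ℝ → ℝ be computed by a fully-connected ReLU network with one-dimensional input and output and total number of hidden neurons p. Then the set Φ of points where f fails to be differentiable is finite, of cardinality at most 2^p − 1, and f is affine on every interval disjoint from Φ (in particular, on each connected component of ℝ \ Φ). -/
/-- The coordinatewise ReLU map on `ℝᵏ`. -/
def reluMap (k : ℕ) (y : EuclideanSpace ℝ (Fin k)) : EuclideanSpace ℝ (Fin k) :=
  WithLp.toLp 2 (fun i => max 0 (y i))

/-- `IsReLUNetTail1 hidden k g` says that `g : ℝᵏ → ℝ` is computed by the tail of a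
ReLU network (affine layers interleaved with ReLUs, hidden widths `hidden`,
one-dimensional output). -/
def IsReLUNetTail1 : List ℕ → ∀ k : ℕ, (EuclideanSpace ℝ (Fin k) → ℝ) → Prop
  | [], k, g => ∃ A : EuclideanSpace ℝ (Fin k) →ᵃ[ℝ] ℝ, g = ⇑A
  | j :: rest, k, g =>
      ∃ (A : EuclideanSpace ℝ (Fin k) →ᵃ[ℝ] EuclideanSpace ℝ (Fin j))
        (h : EuclideanSpace ℝ (Fin j) → ℝ),
        IsReLUNetTail1 rest j h ∧ g = fun x => h (reluMap j (A x))

/-- `IsReLUNet1 hidden f` says that `f : ℝ → ℝ` is computed by a fully-connected ReLU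
network with one-dimensional input and output and hidden layer widths `hidden`. -/
def IsReLUNet1 (hidden : List ℕ) (f : ℝ → ℝ) : Prop :=
  match hidden with
  | [] => ∃ A : ℝ →ᵃ[ℝ] ℝ, f = ⇑A
  | k :: rest =>
      ∃ (A : ℝ →ᵃ[ℝ] EuclideanSpace ℝ (Fin k)) (g : EuclideanSpace ℝ (Fin k) → ℝ),
        IsReLUNetTail1 rest k g ∧ f = fun x => g (reluMap k (A x))

/-!
Call a function piecewise affine with breakpoints in a finite set `Φ` if it is affine on every
interval avoiding `Φ`. Affine maps preserve this, and a ReLU applied to such a scalar function adds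
at most one breakpoint in each of the `|Φ| + 1` gaps of `Φ`. Hence a layer of width `k` turns
`|Φ| + 1` pieces into at most `(|Φ| + 1)(k + 1) ≤ (|Φ| + 1) 2ᵏ` pieces, and the whole network has
at most `2ᵖ` pieces. Off the breakpoints `f` is locally affine, hence differentiable; at a
breakpoint where `f` is differentiable the pieces on both sides are the tangent line, so on an
interval free of points of non-differentiability they all coincide.
-/

open Set Filter Topology

namespace Set

variable {α : Type*} [LinearOrder α]

theorem OrdConnected.subset_Iio_or_subset_Ioi {s : Set α} (hs : s.OrdConnected) {b : α}
    (hb : b ∉ s) : s ⊆ Iio b ∨ s ⊆ Ioi b := by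
  by_contra! h
  obtain ⟨x, hxs, hxb⟩ := not_subset.mp h.1
  obtain ⟨y, hys, hyb⟩ := not_subset.mp h.2
  simp only [mem_Iio, mem_Ioi, not_lt] at hxb hyb
  exact hb (hs.out hys hxs ⟨hyb, hxb⟩)

theorem ncard_inter_Iio_add_ncard_inter_Ioi {Φ : Set α} (hΦ : Φ.Finite) {b : α} (hb : b ∈ Φ) :
    (Φ ∩ Iio b).ncard + (Φ ∩ Ioi b).ncard + 1 = Φ.ncard := by
  have hsplit : Φ \ {b} = (Φ ∩ Iio b) ∪ (Φ ∩ Ioi b) := by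
    ext x
    simp only [mem_sdiff, mem_singleton_iff, mem_union, mem_inter_iff, mem_Iio, mem_Ioi]
    constructor
    · rintro ⟨hx, hxb⟩
      exact (lt_or_gt_of_ne hxb).imp (⟨hx, ·⟩) (⟨hx, ·⟩)
    · rintro (⟨hx, h⟩ | ⟨hx, h⟩)
      exacts [⟨hx, h.ne⟩, ⟨hx, h.ne'⟩]
  have hdisj : Disjoint (Φ ∩ Iio b) (Φ ∩ Ioi b) :=
    disjoint_left.mpr fun x hx hx' => lt_asymm hx.2 hx'.2
  rw [← ncard_sdiff_singleton_add_one hb hΦ, hsplit,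
    ncard_union_eq hdisj (hΦ.inter_of_left _) (hΦ.inter_of_left _)]

theorem Finite.ordConnected_induction {Φ : Set α} (hΦ : Φ.Finite) {P : Set α → Prop}
    (base : ∀ t, t.OrdConnected → Disjoint t Φ → P t)
    (split : ∀ t, t.OrdConnected → ∀ b ∈ t, b ∈ Φ → P (t ∩ Iio b) → P (t ∩ Ioi b) → P t)
    {t : Set α} (ht : t.OrdConnected) : P t := by
  induction hn : (Φ ∩ t).ncard using Nat.strong_induction_on generalizing t with
  | _ n ih =>
  rcases (Φ ∩ t).eq_empty_or_nonempty with hempty | ⟨b, hbΦ, hbt⟩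
  · exact base t ht (disjoint_iff_inter_eq_empty.mpr (by rwa [inter_comm]))
  · have hlt : ∀ I : Set α, b ∉ I → (Φ ∩ (t ∩ I)).ncard < n := fun I hbI =>
      hn ▸ ncard_lt_ncard ⟨inter_subset_inter_right _ inter_subset_left,
        fun h => hbI (h ⟨hbΦ, hbt⟩).2.2⟩ (hΦ.inter_of_left t)
    exact split t ht b hbt hbΦ
      (ih _ (hlt (Iio b) (lt_irrefl b)) (ht.inter ordConnected_Iio) rfl)
      (ih _ (hlt (Ioi b) (lt_irrefl b)) (ht.inter ordConnected_Ioi) rfl)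

end Set

def IsPiecewiseAffineOn {E : Type*} [AddCommGroup E] [Module ℝ E] (t Φ : Set ℝ) (u : ℝ → E) :
    Prop :=
  ∀ s ⊆ t, s.OrdConnected → Disjoint s Φ → ∃ g : ℝ →ᵃ[ℝ] E, EqOn u g s

namespace IsPiecewiseAffineOn

variable {E F : Type*} [AddCommGroup E] [Module ℝ E] [AddCommGroup F] [Module ℝ F]
  {t Φ : Set ℝ} {u : ℝ → E}

theorem of_affineMap (g : ℝ →ᵃ[ℝ] E) : IsPiecewiseAffineOn t Φ g :=
  fun _ _ _ _ => ⟨g, eqOn_refl _ _⟩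

theorem mono (hu : IsPiecewiseAffineOn t Φ u) {t' Ψ : Set ℝ} (ht : t' ⊆ t) (hΦ : Φ ⊆ Ψ) :
    IsPiecewiseAffineOn t' Ψ u :=
  fun s hst hs hsΨ => hu s (hst.trans ht) hs (hsΨ.mono_right hΦ)

theorem affineMap_comp (hu : IsPiecewiseAffineOn t Φ u) (A : E →ᵃ[ℝ] F) :
    IsPiecewiseAffineOn t Φ (fun x => A (u x)) := fun s hst hs hsΦ => by
  obtain ⟨g, hg⟩ := hu s hst hs hsΦ
  exact ⟨A.comp g, fun x hx => congrArg A (hg hx)⟩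

theorem pi {ι : Type*} {u : ℝ → ι → E} (hu : ∀ i, IsPiecewiseAffineOn t Φ (fun x => u x i)) :
    IsPiecewiseAffineOn t Φ u := fun s hst hs hsΦ => by
  choose g hg using fun i => hu i s hst hs hsΦ
  exact ⟨AffineMap.pi g, fun x hx => funext fun i => hg i hx⟩

end IsPiecewiseAffineOn

namespace AffineMap

theorem apply_eq_add_smul_linear_one {E : Type*} [AddCommGroup E] [Module ℝ E]
    (g : ℝ →ᵃ[ℝ] E) (x y : ℝ) : g x = g y + (x - y) • g.linear 1 := by
  have h := g.linearMap_vsub x y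
  rw [vsub_eq_sub, vsub_eq_sub, ← mul_one (x - y), ← smul_eq_mul, map_smul] at h
  rw [h, add_sub_cancel]

theorem exists_nonneg_or_nonpos_on_ordConnected (g : ℝ →ᵃ[ℝ] ℝ) :
    ∃ z, ∀ s : Set ℝ, s.OrdConnected → z ∉ s → (∀ x ∈ s, 0 ≤ g x) ∨ (∀ x ∈ s, g x ≤ 0) := by
  set m := g.linear 1
  by_cases hm : m = 0
  · have hconst : ∀ x, g x = g 0 := fun x => by simp [g.apply_eq_add_smul_linear_one x 0, m, hm]
    refine ⟨0, fun s _ _ => ?_⟩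
    rcases le_total 0 (g 0) with h | h
    exacts [Or.inl fun x _ => hconst x ▸ h, Or.inr fun x _ => hconst x ▸ h]
  · refine ⟨-g 0 / m, fun s hs hz => ?_⟩
    have hg : ∀ x, g x = (x - -g 0 / m) * m := fun x => by
      rw [g.apply_eq_add_smul_linear_one x 0, smul_eq_mul]
      field_simp
      ring
    rcases hs.subset_Iio_or_subset_Ioi hz with hside | hside <;>
      rcases lt_or_gt_of_ne hm with hm' | hm'
    · exact Or.inl fun x hx => by rw [hg]; nlinarith [mem_Iio.mp (hside hx)]
    · exact Or.inr fun x hx => by rw [hg]; nlinarith [mem_Iio.mp (hside hx)]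
    · exact Or.inr fun x hx => by rw [hg]; nlinarith [mem_Ioi.mp (hside hx)]
    · exact Or.inl fun x hx => by rw [hg]; nlinarith [mem_Ioi.mp (hside hx)]

theorem exists_isPiecewiseAffineOn_relu (g : ℝ →ᵃ[ℝ] ℝ) :
    ∃ z, IsPiecewiseAffineOn univ {z} (fun x => max 0 (g x)) := by
  obtain ⟨z, hz⟩ := g.exists_nonneg_or_nonpos_on_ordConnected
  refine ⟨z, fun s _ hs hsz => ?_⟩
  rcases hz s hs (disjoint_singleton_right.mp hsz) with h | h
  · exact ⟨g, fun x hx => max_eq_right (h x hx)⟩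
  · exact ⟨AffineMap.const ℝ ℝ 0, fun x hx => max_eq_left (h x hx)⟩

end AffineMap

namespace IsPiecewiseAffineOn

theorem relu {Φ : Set ℝ} (hΦ : Φ.Finite) {u : ℝ → ℝ} (hu : IsPiecewiseAffineOn univ Φ u) :
    ∃ Ψ : Set ℝ, Ψ.Finite ∧ Ψ.ncard ≤ Φ.ncard + 1 ∧
      IsPiecewiseAffineOn univ (Φ ∪ Ψ) (fun x => max 0 (u x)) := by
  suffices ∀ t : Set ℝ, t.OrdConnected → ∃ Ψ : Set ℝ, Ψ.Finite ∧ Ψ.ncard ≤ (Φ ∩ t).ncard + 1 ∧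
      IsPiecewiseAffineOn t (Φ ∪ Ψ) (fun x => max 0 (u x)) by
    simpa using this univ ordConnected_univ
  intro t ht
  apply hΦ.ordConnected_induction ?_ ?_ ht
  · intro t ht htΦ
    obtain ⟨g, hg⟩ := hu t (subset_univ t) ht htΦ
    obtain ⟨z, hz⟩ := g.exists_isPiecewiseAffineOn_relu
    refine ⟨{z}, finite_singleton z, by simp, fun s hst hs hsΦ => ?_⟩
    obtain ⟨h, hh⟩ := hz s (subset_univ s) hs (hsΦ.mono_right subset_union_right)
    exact ⟨h, fun x hx => (congrArg (max 0) (hg (hst hx))).trans (hh hx)⟩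
  · rintro t - b hbt hbΦ ⟨Ψ₁, hΨ₁, hcard₁, h₁⟩ ⟨Ψ₂, hΨ₂, hcard₂, h₂⟩
    refine ⟨Ψ₁ ∪ Ψ₂, hΨ₁.union hΨ₂, ?_, fun s hst hs hsΦ => ?_⟩
    · have hsplit := ncard_inter_Iio_add_ncard_inter_Ioi (hΦ.inter_of_left t) ⟨hbΦ, hbt⟩
      rw [inter_assoc, inter_assoc] at hsplit
      have := ncard_union_le Ψ₁ Ψ₂
      omega
    · have hbs : b ∉ s := fun hbs => disjoint_left.mp hsΦ hbs (Or.inl hbΦ)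
      rcases hs.subset_Iio_or_subset_Ioi hbs with hside | hside
      · exact h₁ s (subset_inter hst hside) hs
          (hsΦ.mono_right (union_subset_union_right Φ subset_union_left))
      · exact h₂ s (subset_inter hst hside) hs
          (hsΦ.mono_right (union_subset_union_right Φ subset_union_right))

theorem reluMap_comp {k : ℕ} {Φ : Set ℝ} (hΦ : Φ.Finite) {c : ℝ → EuclideanSpace ℝ (Fin k)}
    (hc : IsPiecewiseAffineOn univ Φ c) :
    ∃ Φ' : Set ℝ, Φ'.Finite ∧ Φ'.ncard + 1 ≤ (Φ.ncard + 1) * 2 ^ k ∧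
      IsPiecewiseAffineOn univ Φ' (fun x => reluMap k (c x)) := by
  choose Ψ hΨ hcard hrelu using fun i : Fin k =>
    (hc.affineMap_comp (EuclideanSpace.projₗ i).toAffineMap).relu hΦ
  refine ⟨Φ ∪ ⋃ i, Ψ i, hΦ.union (finite_iUnion hΨ), ?_, ?_⟩
  · calc (Φ ∪ ⋃ i, Ψ i).ncard + 1 ≤ Φ.ncard + ∑ i, (Ψ i).ncard + 1 := by
          gcongr
          exact (ncard_union_le _ _).trans (Nat.add_le_add_left (ncard_iUnion_le_of_fintype Ψ) _)
      _ ≤ Φ.ncard + ∑ _i : Fin k, (Φ.ncard + 1) + 1 := by gcongr with i; exact hcard i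
      _ = (Φ.ncard + 1) * (k + 1) := by simp only [Finset.sum_const, Finset.card_univ,
          Fintype.card_fin, smul_eq_mul]; ring
      _ ≤ (Φ.ncard + 1) * 2 ^ k := Nat.mul_le_mul_left _ Nat.lt_two_pow_self
  · have hcoord (i : Fin k) : IsPiecewiseAffineOn univ (Φ ∪ ⋃ i, Ψ i) (fun x => max 0 (c x i)) :=
      (hrelu i).mono subset_rfl (union_subset_union_right Φ (subset_iUnion Ψ i))
    exact (pi hcoord).affineMap_comp
      (EuclideanSpace.equiv (Fin k) ℝ).symm.toLinearEquiv.toLinearMap.toAffineMap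

end IsPiecewiseAffineOn

theorem IsReLUNetTail1.isPiecewiseAffineOn_comp {rest : List ℕ} {k : ℕ}
    {g : EuclideanSpace ℝ (Fin k) → ℝ} (hg : IsReLUNetTail1 rest k g) {Φ : Set ℝ} (hΦ : Φ.Finite)
    {c : ℝ → EuclideanSpace ℝ (Fin k)} (hc : IsPiecewiseAffineOn univ Φ c) :
    ∃ Φ' : Set ℝ, Φ'.Finite ∧ Φ'.ncard + 1 ≤ (Φ.ncard + 1) * 2 ^ rest.sum ∧
      IsPiecewiseAffineOn univ Φ' (fun x => g (c x)) := by
  induction rest generalizing k g Φ c with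
  | nil =>
    obtain ⟨A, rfl⟩ := hg
    exact ⟨Φ, hΦ, by simp, hc.affineMap_comp A⟩
  | cons j rest ih =>
    obtain ⟨A, h, hh, rfl⟩ := hg
    obtain ⟨Φ₁, hΦ₁, hcard₁, hc₁⟩ := (hc.affineMap_comp A).reluMap_comp hΦ
    obtain ⟨Φ', hΦ', hcard', hc'⟩ := ih hh hΦ₁ hc₁
    refine ⟨Φ', hΦ', ?_, hc'⟩
    calc Φ'.ncard + 1 ≤ (Φ₁.ncard + 1) * 2 ^ rest.sum := hcard'
      _ ≤ (Φ.ncard + 1) * 2 ^ j * 2 ^ rest.sum := Nat.mul_le_mul_right _ hcard₁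
      _ = (Φ.ncard + 1) * 2 ^ (j :: rest).sum := by rw [List.sum_cons, pow_add, mul_assoc]

theorem IsReLUNet1.exists_isPiecewiseAffineOn {hidden : List ℕ} {f : ℝ → ℝ}
    (hf : IsReLUNet1 hidden f) :
    ∃ Φ : Set ℝ, Φ.Finite ∧ Φ.ncard + 1 ≤ 2 ^ hidden.sum ∧ IsPiecewiseAffineOn univ Φ f := by
  match hidden, hf with
  | [], ⟨A, hA⟩ => exact ⟨∅, finite_empty, by simp, hA ▸ .of_affineMap A⟩
  | k :: rest, ⟨A, g, hg, hfg⟩ =>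
    obtain ⟨Φ₁, hΦ₁, hcard₁, hc₁⟩ :=
      (IsPiecewiseAffineOn.of_affineMap (Φ := ∅) A).reluMap_comp finite_empty
    obtain ⟨Φ, hΦ, hcard, hf⟩ := hg.isPiecewiseAffineOn_comp hΦ₁ hc₁
    refine ⟨Φ, hΦ, ?_, hfg ▸ hf⟩
    calc Φ.ncard + 1 ≤ (Φ₁.ncard + 1) * 2 ^ rest.sum := hcard
      _ ≤ 2 ^ k * 2 ^ rest.sum := Nat.mul_le_mul_right _ (by simpa using hcard₁)
      _ = 2 ^ (k :: rest).sum := by rw [List.sum_cons, pow_add]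

section Calculus

variable {E : Type*} [NormedAddCommGroup E] [NormedSpace ℝ E]

theorem AffineMap.apply_eq_of_eventuallyEq_of_hasDerivAt {u : ℝ → E} {d : E} {b : ℝ}
    {S : Set ℝ} (g : ℝ →ᵃ[ℝ] E) (hu : HasDerivAt u d b) (hS : UniqueDiffWithinAt ℝ S b)
    (hg : u =ᶠ[𝓝[S] b] g) (x : ℝ) : g x = u b + (x - b) • d := by
  have : (𝓝[S] b).NeBot := mem_closure_iff_nhdsWithin_neBot.mp hS.mem_closure
  have hb : g b = u b := tendsto_nhds_unique
    ((hu.continuousAt.tendsto.mono_left nhdsWithin_le_nhds).congr' hg)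
    (g.hasDerivAt.continuousAt.tendsto.mono_left nhdsWithin_le_nhds) |>.symm
  have hd : g.linear 1 = d :=
    hS.eq_deriv _ g.hasDerivWithinAt (hu.hasDerivWithinAt.congr_of_eventuallyEq hg.symm hb)
  rw [g.apply_eq_add_smul_linear_one x b, hb, hd]

namespace IsPiecewiseAffineOn

variable {Φ : Set ℝ} {u : ℝ → E}

theorem differentiableAt (hu : IsPiecewiseAffineOn univ Φ u) (hΦ : IsClosed Φ) {x : ℝ}
    (hx : x ∉ Φ) : DifferentiableAt ℝ u x := by
  obtain ⟨a, c, hxac, hac⟩ := mem_nhds_iff_exists_Ioo_subset.mp (hΦ.isOpen_compl.mem_nhds hx)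
  obtain ⟨g, hg⟩ := hu _ (subset_univ _) ordConnected_Ioo (subset_compl_iff_disjoint_right.mp hac)
  exact g.differentiableAt.congr_of_eventuallyEq
    (eventuallyEq_of_mem (Ioo_mem_nhds hxac.1 hxac.2) hg)

theorem exists_eqOn_of_differentiableAt (hu : IsPiecewiseAffineOn univ Φ u) (hΦ : Φ.Finite)
    {t : Set ℝ} (ht : t.OrdConnected) (hdiff : ∀ x ∈ t, DifferentiableAt ℝ u x) :
    ∃ g : ℝ →ᵃ[ℝ] E, EqOn u g t := by
  revert hdiff
  apply hΦ.ordConnected_induction ?_ ?_ ht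
  · exact fun t ht htΦ _ => hu t (subset_univ t) ht htΦ
  · rintro t ht b hbt - ih₁ ih₂ hdiff
    obtain ⟨g₁, hg₁⟩ := ih₁ fun x hx => hdiff x hx.1
    obtain ⟨g₂, hg₂⟩ := ih₂ fun x hx => hdiff x hx.1
    have hd := (hdiff b hbt).hasDerivAt
    refine ⟨AffineMap.mk' (fun x => u b + (x - b) • deriv u b)
      (LinearMap.id.smulRight (deriv u b)) b fun x => by simp [add_comm], fun x hx => ?_⟩
    rcases lt_trichotomy x b with hxb | rfl | hxb
    · have hnear : u =ᶠ[𝓝[<] b] g₁ := mem_of_superset (Ico_mem_nhdsLT hxb)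
        fun y hy => hg₁ ⟨ht.out hx hbt ⟨hy.1, hy.2.le⟩, hy.2⟩
      exact (hg₁ ⟨hx, hxb⟩).trans
        (g₁.apply_eq_of_eventuallyEq_of_hasDerivAt hd (uniqueDiffWithinAt_Iio b) hnear x)
    · simp
    · have hnear : u =ᶠ[𝓝[>] b] g₂ := mem_of_superset (Ioc_mem_nhdsGT hxb)
        fun y hy => hg₂ ⟨ht.out hbt hx ⟨hy.1.le, hy.2⟩, hy.1⟩
      exact (hg₂ ⟨hx, hxb⟩).trans
        (g₂.apply_eq_of_eventuallyEq_of_hasDerivAt hd (uniqueDiffWithinAt_Ioi b) hnear x)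

end IsPiecewiseAffineOn

end Calculus

/-- For a ReLU network `f : ℝ → ℝ` with `p` hidden neurons, the set `Φ` of points of
non-differentiability is finite with at most `2 ^ p - 1` elements, and `f` is affine on
every interval (order-connected set) disjoint from `Φ`. -/
theorem relu_net_one_dim_nondiff_set (hidden : List ℕ) (f : ℝ → ℝ)
    (hf : IsReLUNet1 hidden f) :
    {x : ℝ | ¬ DifferentiableAt ℝ f x}.Finite ∧
    {x : ℝ | ¬ DifferentiableAt ℝ f x}.ncard ≤ 2 ^ hidden.sum - 1 ∧
    ∀ s : Set ℝ, s.OrdConnected → Disjoint s {x : ℝ | ¬ DifferentiableAt ℝ f x} →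
      ∃ g : ℝ →ᵃ[ℝ] ℝ, Set.EqOn f (⇑g) s := by
  obtain ⟨Φ, hΦ, hcard, hf⟩ := hf.exists_isPiecewiseAffineOn
  have hsub : {x : ℝ | ¬ DifferentiableAt ℝ f x} ⊆ Φ := fun x hx =>
    by_contra fun hxΦ => hx (hf.differentiableAt hΦ.isClosed hxΦ)
  refine ⟨hΦ.subset hsub, ?_, fun s hs hsd => hf.exists_eqOn_of_differentiableAt hΦ hs ?_⟩
  · have := ncard_le_ncard hsub hΦ
    omega
  · exact fun x hx => by_contra fun hx' => disjoint_left.mp hsd hx hx'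
end

section
/- Let f : ℝⁿ → ℝᵏ be a function, C ⊆ ℝⁿ a convex set, and g : ℝⁿ → ℝᵏ an affine map with f = g on C. Let A : ℝᵏ → ℝ^{k'} be an affine map and σ : ℝ^{k'} → ℝ^{k'} the coordinatewise ReLU map. Then for every activation pattern s : Fin k' → Bool, the set C_s = C ∩ { x | ∀ i, (s i = true → 0 ≤ (A (g x)) i) ∧ (s i = false → (A (g x)) i < 0) } is convex, σ ∘ A ∘ f agrees with an affine map on C_s, and the sets C_s over all 2^{k'} patterns s cover C. Consequently, applying a ReLU layer with k' neurons to a function that is affine on each of R convex sets covering ℝⁿ yields a function that is affine on each of at most R · 2^{k'} convex sets covering ℝⁿ. -/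
open Set Finset

section ActivationPattern

variable {ι E F : Type*}

def activationCone (s : ι → Bool) : Set (EuclideanSpace ℝ ι) :=
  {y | ∀ i, (s i = true → 0 ≤ y i) ∧ (s i = false → y i < 0)}

theorem convex_activationCone (s : ι → Bool) : Convex ℝ (activationCone s) := by
  have hcoord : ∀ i, IsLinearMap ℝ fun y : EuclideanSpace ℝ ι => y i := fun i =>
    (PiLp.projₗ 2 (fun _ => ℝ) i).isLinear
  rw [activationCone, ofPred_forall]
  refine convex_iInter fun i => ?_
  cases s i
  · simpa using convex_halfSpace_lt (hcoord i) 0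
  · simpa using convex_halfSpace_ge (hcoord i) 0

theorem iUnion_activationCone : ⋃ s : ι → Bool, activationCone s = univ :=
  eq_univ_of_forall fun y => mem_iUnion.2 ⟨fun i => decide (0 ≤ y i), fun _ =>
    ⟨of_decide_eq_true, fun h => not_le.1 (of_decide_eq_false h)⟩⟩

theorem subset_iUnion_inter_preimage_activationCone (C : Set E) (φ : E → EuclideanSpace ℝ ι) :
    C ⊆ ⋃ s : ι → Bool, C ∩ φ ⁻¹' activationCone s := by
  rw [← inter_iUnion, ← preimage_iUnion, iUnion_activationCone, preimage_univ, inter_univ]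

theorem Convex.inter_preimage_activationCone [AddCommGroup E] [Module ℝ E] {C : Set E}
    (hC : Convex ℝ C) (φ : E →ᵃ[ℝ] EuclideanSpace ℝ ι) (s : ι → Bool) :
    Convex ℝ (C ∩ φ ⁻¹' activationCone s) :=
  hC.inter ((convex_activationCone s).affine_preimage φ)

noncomputable def activationMask (s : ι → Bool) :
    EuclideanSpace ℝ ι →ₗ[ℝ] EuclideanSpace ℝ ι where
  toFun y := WithLp.toLp 2 fun i => if s i then y i else 0
  map_add' a b := by ext i; by_cases h : s i <;> simp [h]
  map_smul' c a := by ext i; by_cases h : s i <;> simp [h]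

theorem reluMap_eq_activationMask {m : ℕ} {s : Fin m → Bool} {y : EuclideanSpace ℝ (Fin m)}
    (hy : y ∈ activationCone s) : reluMap m y = activationMask s y := by
  ext i
  cases hs : s i
  · simp [reluMap, activationMask, hs, (hy i).2 hs |>.le]
  · simp [reluMap, activationMask, hs, (hy i).1 hs]

theorem exists_affineMap_eqOn_reluMap_comp [AddCommGroup E] [Module ℝ E] [AddCommGroup F]
    [Module ℝ F] {m : ℕ} {f : E → F} {C : Set E} {g : E →ᵃ[ℝ] F}
    (hfg : EqOn f g C) (A : F →ᵃ[ℝ] EuclideanSpace ℝ (Fin m)) (s : Fin m → Bool) :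
    ∃ h : E →ᵃ[ℝ] EuclideanSpace ℝ (Fin m),
      EqOn (fun x => reluMap m (A (f x))) h (C ∩ (A.comp g) ⁻¹' activationCone s) :=
  ⟨(activationMask s).toAffineMap.comp (A.comp g), fun x ⟨hxC, hx⟩ => by
    simp only [hfg hxC]
    exact reluMap_eq_activationMask hx⟩

end ActivationPattern

theorem iUnion_image₂_eq_univ {β γ : Type*} [DecidableEq (Set γ)] {𝒞 : Finset (Set γ)}
    {T : Finset β} (P : Set γ → β → Set γ) (hcover : ⋃ D ∈ 𝒞, D = univ)
    (hP : ∀ D ∈ 𝒞, D ⊆ ⋃ b ∈ T, P D b) : ⋃ E ∈ image₂ P 𝒞 T, E = univ := by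
  refine eq_univ_of_forall fun x => ?_
  obtain ⟨D, hD, hxD⟩ := mem_iUnion₂.1 (hcover ▸ mem_univ x)
  obtain ⟨b, hb, hxb⟩ := mem_iUnion₂.1 (hP D hD hxD)
  exact mem_iUnion₂.2 ⟨P D b, mem_image₂_of_mem hD hb, hxb⟩

/-- Inductive step for counting linear regions: refining a convex set on which `f` is
affine by the activation patterns of a further ReLU layer yields convex pieces, on each
of which `σ ∘ A ∘ f` is affine, and the pieces cover the original set.  Consequently,
applying a ReLU layer with `k'` neurons to a function affine on each of `R` convex sets
covering `ℝⁿ` yields a function affine on each of at most `R * 2 ^ k'` convex sets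
covering `ℝⁿ`. -/
theorem relu_layer_refines_convex_regions (n k k' : ℕ)
    (f : EuclideanSpace ℝ (Fin n) → EuclideanSpace ℝ (Fin k))
    (C : Set (EuclideanSpace ℝ (Fin n))) (hC : Convex ℝ C)
    (g : EuclideanSpace ℝ (Fin n) →ᵃ[ℝ] EuclideanSpace ℝ (Fin k))
    (hfg : Set.EqOn f (⇑g) C)
    (A : EuclideanSpace ℝ (Fin k) →ᵃ[ℝ] EuclideanSpace ℝ (Fin k')) :
    ((∀ s : Fin k' → Bool,
        Convex ℝ (C ∩ {x | ∀ i : Fin k',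
          (s i = true → 0 ≤ A (g x) i) ∧ (s i = false → A (g x) i < 0)}) ∧
        ∃ h : EuclideanSpace ℝ (Fin n) →ᵃ[ℝ] EuclideanSpace ℝ (Fin k'),
          Set.EqOn (fun x => reluMap k' (A (f x))) (⇑h)
            (C ∩ {x | ∀ i : Fin k',
              (s i = true → 0 ≤ A (g x) i) ∧ (s i = false → A (g x) i < 0)})) ∧
      C ⊆ ⋃ s : Fin k' → Bool,
        (C ∩ {x | ∀ i : Fin k',
          (s i = true → 0 ≤ A (g x) i) ∧ (s i = false → A (g x) i < 0)})) ∧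
    -- Consequence: a ReLU layer multiplies the number of convex linear regions by at
    -- most `2 ^ k'`.
    ∀ (f' : EuclideanSpace ℝ (Fin n) → EuclideanSpace ℝ (Fin k)) (R : ℕ)
      (𝒞 : Finset (Set (EuclideanSpace ℝ (Fin n)))),
      𝒞.card ≤ R →
      (⋃ D ∈ 𝒞, D) = Set.univ →
      (∀ D ∈ 𝒞, Convex ℝ D ∧
        ∃ g' : EuclideanSpace ℝ (Fin n) →ᵃ[ℝ] EuclideanSpace ℝ (Fin k),
          Set.EqOn f' (⇑g') D) →
      ∃ 𝒟 : Finset (Set (EuclideanSpace ℝ (Fin n))),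
        𝒟.card ≤ R * 2 ^ k' ∧
        (⋃ D ∈ 𝒟, D) = Set.univ ∧
        ∀ D ∈ 𝒟, Convex ℝ D ∧
          ∃ h : EuclideanSpace ℝ (Fin n) →ᵃ[ℝ] EuclideanSpace ℝ (Fin k'),
            Set.EqOn (fun x => reluMap k' (A (f' x))) (⇑h) D := by
  refine ⟨⟨fun s => ⟨hC.inter_preimage_activationCone (A.comp g) s,
    exists_affineMap_eqOn_reluMap_comp hfg A s⟩,
    subset_iUnion_inter_preimage_activationCone C (A.comp g)⟩, ?_⟩
  intro f' R 𝒞 hcard hcover h𝒞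
  choose! g' hg' using fun D hD => (h𝒞 D hD).2
  classical
  refine ⟨image₂ (fun D s => D ∩ (A.comp (g' D)) ⁻¹' activationCone s) 𝒞 univ, ?_, ?_, ?_⟩
  · calc _ ≤ #𝒞 * #(univ : Finset (Fin k' → Bool)) := card_image₂_le _ _ _
      _ = #𝒞 * 2 ^ k' := by simp
      _ ≤ R * 2 ^ k' := Nat.mul_le_mul_right _ hcard
  · refine iUnion_image₂_eq_univ _ hcover fun D _ => ?_
    simpa using subset_iUnion_inter_preimage_activationCone D (A.comp (g' D))
  · intro E hE
    obtain ⟨D, hD, s, -, rfl⟩ := mem_image₂.1 hE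
    exact ⟨(h𝒞 D hD).1.inter_preimage_activationCone _ s,
      exists_affineMap_eqOn_reluMap_comp (hg' D hD) A s⟩
end

section
/- Let g : ℝ → ℝ be a function and let T ⊆ ℝ be a set of cardinality strictly greater than q such that g fails to be differentiable at every point of T. Then g cannot be represented by a shallow ReLU network with q neurons: there are no real parameters aᵢ, wᵢ, bᵢ (i < q) and c with g(x) = c + ∑_{i=0}^{q−1} aᵢ · max(0, wᵢ x + bᵢ) for all x ∈ ℝ. Equivalently, the number of neurons of any shallow ReLU network expressing g is bounded below by the number of points of non-differentiability of g. -/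
/-! Away from its breakpoints `-bᵢ / wᵢ` every neuron is locally constant or locally affine, so a
shallow ReLU network with `q` neurons is differentiable outside a set of at most `q` points. -/

open Set

lemma differentiableAt_max_zero {t : ℝ} (ht : t ≠ 0) :
    DifferentiableAt ℝ (fun s : ℝ => max 0 s) t := by
  rcases ht.lt_or_gt with hneg | hpos
  · exact (differentiableAt_const 0).congr_of_eventuallyEq <|
      (eventually_lt_nhds hneg).mono fun s hs => max_eq_left hs.le
  · exact differentiableAt_id.congr_of_eventuallyEq <|
      (eventually_gt_nhds hpos).mono fun s hs => max_eq_right hs.le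

/-- For `w = 0` the breakpoint `-b / w` is the junk value `0`, where the neuron is constant anyway. -/
lemma differentiableAt_max_zero_affine {w b x : ℝ} (hx : x ≠ -b / w) :
    DifferentiableAt ℝ (fun y => max 0 (w * y + b)) x := by
  by_cases hw : w = 0
  · simp only [hw, zero_mul, zero_add]
    exact differentiableAt_const _
  · have hpre : w * x + b ≠ 0 := fun h => hx <| by rw [eq_div_iff hw]; linarith
    exact (differentiableAt_max_zero hpre).comp x (by fun_prop)

lemma differentiableAt_shallow_relu_net {ι : Type*} [Fintype ι] (a w b : ι → ℝ) (c : ℝ) {x : ℝ}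
    (hx : x ∉ range fun i => -b i / w i) :
    DifferentiableAt ℝ (fun y => c + ∑ i, a i * max 0 (w i * y + b i)) x :=
  (differentiableAt_const c).add <| DifferentiableAt.fun_sum fun i _ =>
    (differentiableAt_max_zero_affine fun h => hx ⟨i, h.symm⟩).const_mul (a i)

/-- A function `g : ℝ → ℝ` that fails to be differentiable at more than `q` points
cannot be expressed by a shallow ReLU network with `q` neurons. -/
theorem shallow_relu_net_neuron_lower_bound (q : ℕ) (g : ℝ → ℝ) (T : Set ℝ)
    (hT : (q : ℕ∞) < T.encard)
    (hnd : ∀ x ∈ T, ¬ DifferentiableAt ℝ g x) :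
    ¬ ∃ (a w b : Fin q → ℝ) (c : ℝ),
        ∀ x : ℝ, g x = c + ∑ i : Fin q, a i * max 0 (w i * x + b i) := by
  rintro ⟨a, w, b, c, hg⟩
  have hbreak : (range fun i => -b i / w i).encard ≤ q := by
    simpa [image_univ] using encard_image_le (fun i => -b i / w i) univ
  obtain ⟨x, hxT, hx⟩ : (T \ range fun i => -b i / w i).Nonempty :=
    sdiff_nonempty.mpr fun hsub => ((encard_mono hsub).trans hbreak).not_gt hT
  exact hnd x hxT (funext hg ▸ differentiableAt_shallow_relu_net a w b c hx)
end
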